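/- arXiv:0909.0743 — 3 statements merged into one kernel-verified Lean document; each statement's English description precedes it below -/
import Mathlib

section
/- Let p be a prime and let h, m, n be positive integers with m ≥ n. Then for every s ∈ ℤ_p one has v_p( p^m · Δ_h^n C(s,m) ) ≥ n·(1 + v_p(h)); equivalently, ‖p^m · Δ_h^n C(s,m)‖_p ≤ p^{−n(1+v_p(h))}. -/
open Finset

/-- The forward difference operator `Δ_h^n` with increment `h ≥ 1`:
`Δ_h^n f(s) = ∑_{ν=0}^n (n choose ν)·(−1)^(n−ν)·f(s+νh)`. -/
noncomputable def deltaH (p : ℕ) [Fact p.Prime] (h : ℕ) (f : ℤ_[p] → ℤ_[p])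
    (n : ℕ) (s : ℤ_[p]) : ℤ_[p] :=
  ∑ ν ∈ Finset.range (n + 1),
    (n.choose ν : ℤ_[p]) * (-1) ^ (n - ν) * f (s + (ν : ℤ_[p]) * (h : ℤ_[p]))

/-- The binomial polynomial `C(s,m) = s(s−1)⋯(s−m+1)/m!`, as a function `ℤ_[p] → ℤ_[p]`. -/
noncomputable def binomC (p : ℕ) [Fact p.Prime] (s : ℤ_[p]) (m : ℕ) : ℤ_[p] :=
  Ring.choose s m

/-!
Write `Δ` for the forward difference with step `h`. By Vandermonde,
`Δ C(·,m) = ∑_{k<m} C(h,m-k) C(·,k)`, so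
`p^m Δ^{n+1} C(·,m) = ∑_{k<m} (C(h,m-k) p^(m-k)) · (p^k Δ^n C(·,k))`.
Each first factor is divisible by `p^(1+v_p(h))`, because `j C(h,j) = h C(h-1,j-1)` and
`v_p(j) < j`; induction on `n` (for all `m` at once) gives the claim.
-/

open fwdDiff

theorem deltaH_eq_fwdDiff_iter {p : ℕ} [Fact p.Prime] (h : ℕ) (f : ℤ_[p] → ℤ_[p])
    (n : ℕ) (s : ℤ_[p]) :
    deltaH p h f n s = (Δ_[(h : ℤ_[p])])^[n] f s := by
  rw [fwdDiff_iter_eq_sum_shift, deltaH]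
  refine Finset.sum_congr rfl fun k _ => ?_
  rw [zsmul_eq_mul, nsmul_eq_mul]
  push_cast
  ring

theorem Nat.pow_padicValNat_add_one_dvd_choose_mul_pow {p : ℕ} [Fact p.Prime] (h : ℕ) {j : ℕ}
    (hj : 0 < j) : p ^ (padicValNat p h + 1) ∣ h.choose j * p ^ j := by
  rcases lt_or_ge h j with hhj | hjh
  · simp [Nat.choose_eq_zero_of_lt hhj]
  have hc : h.choose j ≠ 0 := (Nat.choose_pos hjh).ne'
  have hdvd : h ∣ h.choose j * j := by
    obtain ⟨h', rfl⟩ := Nat.exists_add_one_eq.mpr (hj.trans_le hjh)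
    obtain ⟨j', rfl⟩ := Nat.exists_add_one_eq.mpr hj
    exact ⟨_, (Nat.add_one_mul_choose_eq h' j').symm⟩
  have hv : padicValNat p h ≤ padicValNat p (h.choose j) + padicValNat p j := by
    rw [← padicValNat.mul hc hj.ne', ← padicValNat_dvd_iff_le (mul_ne_zero hc hj.ne')]
    exact pow_padicValNat_dvd.trans hdvd
  calc p ^ (padicValNat p h + 1) ∣ p ^ (padicValNat p (h.choose j) + j) :=
        pow_dvd_pow p (by have := padicValNat_lt_self (p := p) hj.ne'; omega)
    _ = p ^ padicValNat p (h.choose j) * p ^ j := pow_add ..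
    _ ∣ h.choose j * p ^ j := mul_dvd_mul_right pow_padicValNat_dvd _

theorem fwdDiff_ringChoose {R : Type*} [Ring R] [BinomialRing R] (h m : ℕ) :
    Δ_[(h : R)] (fun x => Ring.choose x m) =
      ∑ k ∈ range m, h.choose (m - k) • fun x => Ring.choose x k := by
  ext x
  simp only [fwdDiff, Finset.sum_apply, Ring.add_choose_eq m (Nat.cast_commute h x).symm,
    Finset.Nat.sum_antidiagonal_eq_sum_range_succ_mk, Finset.sum_range_succ, Ring.choose_natCast,
    Nat.sub_self, Nat.choose_zero_right, Nat.cast_one, mul_one, add_sub_cancel_right, nsmul_eq_mul]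
  exact Finset.sum_congr rfl fun k _ => (Nat.cast_commute _ _).symm

theorem pow_dvd_pow_mul_fwdDiff_iter_ringChoose {R : Type*} [CommRing R] [BinomialRing R]
    {p : ℕ} [Fact p.Prime] (h n m : ℕ) (x : R) :
    (p : R) ^ (n * (1 + padicValNat p h)) ∣
      (p : R) ^ m * (Δ_[(h : R)])^[n] (fun x => Ring.choose x m) x := by
  induction n generalizing m with
  | zero => simp
  | succ n ih =>
    rw [Function.iterate_succ_apply, fwdDiff_ringChoose, fwdDiff_iter_finsetSum]
    simp only [fwdDiff_iter_const_smul]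
    simp only [Finset.sum_apply, nsmul_eq_mul, Finset.mul_sum]
    refine Finset.dvd_sum fun k hk => ?_
    have hkm : k < m := Finset.mem_range.mp hk
    have hstep :
        (p : R) ^ (1 + padicValNat p h) ∣ (h.choose (m - k) : R) * (p : R) ^ (m - k) := by
      rw [add_comm]
      exact_mod_cast Nat.cast_dvd_cast (α := R)
        (Nat.pow_padicValNat_add_one_dvd_choose_mul_pow (p := p) h (Nat.sub_pos_of_lt hkm))
    calc (p : R) ^ ((n + 1) * (1 + padicValNat p h))
        = (p : R) ^ (1 + padicValNat p h) * (p : R) ^ (n * (1 + padicValNat p h)) := by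
          rw [← pow_add]; ring_nf
      _ ∣ ((h.choose (m - k) : R) * (p : R) ^ (m - k)) *
          ((p : R) ^ k * (Δ_[(h : R)])^[n] (fun x => Ring.choose x k) x) :=
          mul_dvd_mul hstep (ih k)
      _ = (p : R) ^ m *
          ((h.choose (m - k) : R) * (Δ_[(h : R)])^[n] (fun x => Ring.choose x k) x) := by
          rw [← pow_sub_mul_pow _ hkm.le]; ring

theorem stmt0_general (p : ℕ) [Fact p.Prime] (h m n : ℕ)
    (s : ℤ_[p]) :
    (p : ℤ_[p]) ^ (n * (1 + padicValNat p h)) ∣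
        (p : ℤ_[p]) ^ m * deltaH p h (fun x => binomC p x m) n s ∧
      ‖(p : ℤ_[p]) ^ m * deltaH p h (fun x => binomC p x m) n s‖ ≤
        (p : ℝ) ^ (-((n * (1 + padicValNat p h) : ℕ) : ℤ)) := by
  have hdvd := pow_dvd_pow_mul_fwdDiff_iter_ringChoose (p := p) h n m s
  rw [← deltaH_eq_fwdDiff_iter] at hdvd
  exact ⟨hdvd, (PadicInt.norm_le_pow_iff_mem_span_pow _ _).2 (Ideal.mem_span_singleton.2 hdvd)⟩

theorem stmt0 (p : ℕ) [Fact p.Prime] (h m n : ℕ) (hh : 0 < h) (hn : 0 < n) (hnm : n ≤ m)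
    (s : ℤ_[p]) :
    (p : ℤ_[p]) ^ (n * (1 + padicValNat p h)) ∣
        (p : ℤ_[p]) ^ m * deltaH p h (fun x => binomC p x m) n s ∧
      ‖(p : ℤ_[p]) ^ m * deltaH p h (fun x => binomC p x m) n s‖ ≤
        (p : ℝ) ^ (-((n * (1 + padicValNat p h) : ℕ) : ℤ)) :=
  stmt0_general p h m n s
end

section
/- Let p be a prime and f : ℤ_p → ℤ_p a continuous function such that Δ^n f(0) ∈ p^n ℤ_p for every integer n ≥ 0. Then Δ^n f(s) ∈ p^n ℤ_p for every n ≥ 0 and every s ∈ ℤ_p; that is, f ∈ KS_{p,2}. -/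
/-!
From `Δ^n f(m + 1) = Δ^n f(m) + Δ^(n+1) f(m)` and `p^n ∣ p^(n+1)`, induction on `m` propagates the
congruences at `0` to every natural number `m`. Since `Δ^n f` is continuous, the set where
`p^n ∣ Δ^n f` is closed, and it contains the dense subset `ℕ ⊆ ℤ_p`, so it is all of `ℤ_p`.
-/

open Finset

/-- `f ∈ KS_{p,2}`: `f` is continuous and satisfies the Kummer type congruences
`Δ^n f(s) ∈ p^n ℤ_p` for all integers `n ≥ 0` and all `s ∈ ℤ_p`. -/
def KS2 (p : ℕ) [Fact p.Prime] (f : ℤ_[p] → ℤ_[p]) : Prop :=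
  Continuous f ∧ ∀ (n : ℕ) (s : ℤ_[p]), (p : ℤ_[p]) ^ n ∣ deltaH p 1 f n s

open fwdDiff

lemma deltaH_one_eq_fwdDiff_iter (p : ℕ) [Fact p.Prime] (f : ℤ_[p] → ℤ_[p]) (n : ℕ)
    (s : ℤ_[p]) : deltaH p 1 f n s = (Δ_[1])^[n] f s := by
  rw [fwdDiff_iter_eq_sum_shift, deltaH]
  refine sum_congr rfl fun k _ => ?_
  rw [zsmul_eq_mul, nsmul_eq_mul]
  push_cast
  ring

section fwdDiff

variable {M G : Type*} [AddCommMonoid M] [AddCommGroup G]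

lemma fwdDiff_iter_apply_add_self (h : M) (f : M → G) (n : ℕ) (x : M) :
    (Δ_[h])^[n] f (x + h) = (Δ_[h])^[n] f x + (Δ_[h])^[n + 1] f x := by
  rw [Function.iterate_succ_apply', fwdDiff, add_sub_cancel]

theorem Continuous.fwdDiff_iter [TopologicalSpace M] [ContinuousAdd M] [TopologicalSpace G]
    [ContinuousSub G] {f : M → G} (hf : Continuous f) (h : M) (n : ℕ) :
    Continuous ((Δ_[h])^[n] f) := by
  induction n with
  | zero => exact hf
  | succ n ih =>
    rw [Function.iterate_succ']
    exact (ih.comp (continuous_add_const h)).sub ih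

end fwdDiff

lemma pow_dvd_fwdDiff_iter_natCast {M R : Type*} [AddCommMonoidWithOne M] [CommRing R]
    {f : M → R} {a : R} (h0 : ∀ n : ℕ, a ^ n ∣ (Δ_[1])^[n] f 0) (m n : ℕ) :
    a ^ n ∣ (Δ_[1])^[n] f m := by
  induction m generalizing n with
  | zero => simpa only [Nat.cast_zero] using h0 n
  | succ m ih =>
    rw [Nat.cast_succ, fwdDiff_iter_apply_add_self]
    exact dvd_add (ih n) ((pow_dvd_pow a n.le_succ).trans (ih (n + 1)))

lemma PadicInt.isClosed_setOf_pow_dvd (p : ℕ) [Fact p.Prime] (n : ℕ) :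
    IsClosed {x : ℤ_[p] | (p : ℤ_[p]) ^ n ∣ x} := by
  simp_rw [← Ideal.mem_span_singleton, ← PadicInt.norm_le_pow_iff_mem_span_pow]
  exact isClosed_le continuous_norm continuous_const

theorem stmt2 (p : ℕ) [Fact p.Prime] (f : ℤ_[p] → ℤ_[p]) (hf : Continuous f)
    (h0 : ∀ n : ℕ, (p : ℤ_[p]) ^ n ∣ deltaH p 1 f n 0) :
    KS2 p f := by
  refine ⟨hf, fun n s => ?_⟩
  rw [deltaH_one_eq_fwdDiff_iter]
  have hzero : ∀ k : ℕ, (p : ℤ_[p]) ^ k ∣ (Δ_[1])^[k] f 0 := fun k => by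
    simpa only [deltaH_one_eq_fwdDiff_iter] using h0 k
  exact PadicInt.denseRange_natCast.induction_on s
    ((PadicInt.isClosed_setOf_pow_dvd p n).preimage (hf.fwdDiff_iter 1 n))
    fun m => pow_dvd_fwdDiff_iter_natCast hzero m n
end

section
/- Let p be a prime, n ≥ 1, and f₁, …, f_n ∈ WKS^0_{p,2}, with ξ_ν ∈ ℤ_p the unique zero of f_ν (1 ≤ ν ≤ n). Let F be the pointwise product F = f₁·f₂·⋯·f_n. Then: (i) ‖F(s)‖_p = p^{−n}·∏_{ν=1}^n ‖s − ξ_ν‖_p for every s ∈ ℤ_p; (ii) Δ^n F(0)/p^n ≡ n!·∏_{ν=1}^n (Δ¹f_ν(0)/p) (mod pℤ_p); and (iii) v_p( Δ^ν F(0)/p^ν ) ≥ n − ν for 0 ≤ ν ≤ n. -/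
/-!
For `f ∈ WKS⁰_{p,2}` and natural `t, m`, the Gregory–Newton formula
`f (t + m) - f t = ∑_{l ≥ 1} C(m, l) Δ^l f(t)` has leading term `m Δf(t) = p m · unit`, while
every term with `l ≥ 2` is divisible by `p² m`, because `l C(m, l) = m C(m - 1, l - 1)` and
`p² l ∣ p^l ∣ Δ^l f(t)` in `ℤ_p`; the one exception `p = l = 2` is exactly what the extra
congruence `8 ∣ Δ²f(0)` covers. So `‖f s - f t‖ = p⁻¹ ‖s - t‖` on `ℕ`, hence on `ℤ_p` by density;
this gives (i), and `p ∣ f s` everywhere, so `p^n ∣ F` and (iii) follows.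

For (ii), induct on the number of factors with the Leibniz rule
`Δ^{m+1}(g G)(0) = ∑_k C(m+1, k) Δ^k g(0) Δ^{m+1-k} G(k)`: since `p^m ∣ G` and `p ∣ g`, every
term but `k = 1` vanishes modulo `p^{m+2}`, and `Δ^m G(1) ≡ Δ^m G(0) (mod p^{m+1})`.
-/

open Finset

/-- `f ∈ WKS^0_{p,2}`: `f ∈ KS_{p,2}`, `f(0) ∈ pℤ_p`, `Δ¹f(0)/p` is a unit of `ℤ_p`, and
additionally `Δ²f(0)/4 ∈ 2ℤ_2` (i.e. `8 ∣ Δ²f(0)`) in case `p = 2`. -/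
def WKS0 (p : ℕ) [Fact p.Prime] (f : ℤ_[p] → ℤ_[p]) : Prop :=
  KS2 p f ∧ (p : ℤ_[p]) ∣ f 0 ∧
    (∃ u : ℤ_[p], IsUnit u ∧ deltaH p 1 f 1 0 = (p : ℤ_[p]) * u) ∧
    (p = 2 → (p : ℤ_[p]) ^ 3 ∣ deltaH p 1 f 2 0)

open scoped fwdDiff

theorem pow_card_dvd_prod_apply {ι M R : Type*} [CommMonoid R] {π : R} {s : Finset ι}
    {f : ι → M → R} (hf : ∀ i ∈ s, ∀ x, π ∣ f i x) (x : M) : π ^ #s ∣ (∏ i ∈ s, f i) x := by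
  rw [prod_apply, ← prod_const]
  exact prod_dvd_prod_of_dvd _ _ fun i hi ↦ hf i hi x

theorem natCast_mul_dvd_choose_mul {R : Type*} [CommRing R] {a x : R} {l : ℕ} (m : ℕ)
    (h : a * (l + 1 : ℕ) ∣ x) : a * m ∣ (m.choose (l + 1) : R) * x := by
  obtain ⟨c, rfl⟩ := h
  cases m with
  | zero => simp
  | succ m =>
    refine ⟨m.choose l * c, ?_⟩
    have := congrArg (Nat.cast : ℕ → R) (Nat.add_one_mul_choose_eq m l)
    push_cast at this ⊢
    linear_combination (-(a * c)) * this

section FwdDiff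

variable {M R : Type*} [AddCommMonoid M] [CommRing R] (h : M)

theorem fwdDiff_iter_mul_apply (f g : M → R) (n : ℕ) (y : M) :
    (Δ_[h])^[n] (f * g) y =
      ∑ k ∈ range (n + 1),
        (n.choose k : R) * ((Δ_[h])^[k] f y * (Δ_[h])^[n - k] g (y + k • h)) := by
  induction n generalizing f g with
  | zero => simp
  | succ n ih =>
    have hmul : Δ_[h] (f * g) = Δ_[h] f * (fun x ↦ g (x + h)) + f * Δ_[h] g := by
      ext x; simp only [fwdDiff, Pi.mul_apply, Pi.add_apply]; ring
    rw [Function.iterate_succ_apply, hmul, fwdDiff_iter_add, Pi.add_apply, ih, ih, add_comm,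
      sum_choose_succ_mul (fun i j ↦ (Δ_[h])^[i] f y * (Δ_[h])^[j] g (y + i • h))]
    congr 1
    · refine sum_congr rfl fun k hk ↦ ?_
      rw [← Function.iterate_succ_apply, Nat.succ_eq_add_one,
        ← Nat.sub_add_comm (mem_range_succ_iff.mp hk)]
    · refine sum_congr rfl fun k _ ↦ ?_
      rw [fwdDiff_iter_comp_add, ← Function.iterate_succ_apply, succ_nsmul, add_assoc]

theorem dvd_fwdDiff_iter_apply {c : R} {f : M → R} (hf : ∀ x, c ∣ f x) (n : ℕ) (y : M) :
    c ∣ (Δ_[h])^[n] f y := by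
  rw [fwdDiff_iter_eq_sum_shift]
  exact dvd_sum fun k _ ↦ by rw [zsmul_eq_mul]; exact (hf _).mul_left _

def HasKummerCongr (π : R) (f : M → R) : Prop :=
  ∀ n y, π ^ n ∣ (Δ_[h])^[n] f y

namespace HasKummerCongr

variable {h} {π : R}

theorem one : HasKummerCongr h π 1
  | 0, _ => by simp
  | n + 1, y => by
    rw [Function.iterate_succ_apply, Pi.one_def, fwdDiff_const,
      Function.iterate_fixed (fwdDiff_const h 0)]
    exact dvd_zero _

theorem mul {f g : M → R} (hf : HasKummerCongr h π f) (hg : HasKummerCongr h π g) :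
    HasKummerCongr h π (f * g) := fun n y ↦ by
  rw [fwdDiff_iter_mul_apply]
  refine dvd_sum fun k hk ↦ Dvd.dvd.mul_left ?_ _
  rw [← Nat.add_sub_cancel' (mem_range_succ_iff.mp hk), pow_add, Nat.add_sub_cancel_left]
  exact mul_dvd_mul (hf k y) (hg _ _)

theorem prod {ι : Type*} {s : Finset ι} {f : ι → M → R}
    (hf : ∀ i ∈ s, HasKummerCongr h π (f i)) : HasKummerCongr h π (∏ i ∈ s, f i) :=
  prod_induction f (HasKummerCongr h π) (fun _ _ ↦ mul) one hf

theorem pow_succ_dvd_fwdDiff_iter_sub {f : M → R} (hf : HasKummerCongr h π f) (j t : ℕ)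
    (y : M) : π ^ (j + 1) ∣ (Δ_[h])^[j] f (y + t • h) - (Δ_[h])^[j] f y := by
  rw [shift_eq_sum_fwdDiff_iter h ((Δ_[h])^[j] f), sum_range_succ', Nat.choose_zero_right,
    one_smul, Function.iterate_zero_apply, add_sub_cancel_right]
  refine dvd_sum fun k _ ↦ ?_
  rw [nsmul_eq_mul, ← Function.iterate_add_apply]
  refine Dvd.dvd.mul_left ?_ _
  exact (pow_dvd_pow π (by omega)).trans (hf _ y)

theorem pow_add_two_dvd_fwdDiff_iter_mul_sub {g G : M → R} {m : ℕ} {y : M} {c : R}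
    (hg : HasKummerCongr h π g) (hgy : π ∣ g y) (hG : HasKummerCongr h π G)
    (hGval : ∀ x, π ^ m ∣ G x) (hGc : π ^ (m + 1) ∣ (Δ_[h])^[m] G y - c) :
    π ^ (m + 2) ∣ (Δ_[h])^[m + 1] (g * G) y - (m + 1) * (Δ_[h] g y * c) := by
  rw [fwdDiff_iter_mul_apply, ← add_sum_erase _ _ (mem_range.mpr (by omega : 1 < m + 2)),
    add_sub_right_comm]
  refine dvd_add ?_ (dvd_sum fun k hk ↦ Dvd.dvd.mul_left ?_ _)
  · have hshift :
        (Δ_[h])^[m] G (y + h) - c = (Δ_[h])^[m + 1] G y + ((Δ_[h])^[m] G y - c) := by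
      rw [Function.iterate_succ_apply', fwdDiff]; ring
    have hmain :
        ((m + 1).choose 1 : R) * ((Δ_[h])^[1] g y * (Δ_[h])^[m + 1 - 1] G (y + 1 • h)) -
          (m + 1) * (Δ_[h] g y * c) =
        (m + 1) * ((Δ_[h])^[1] g y * ((Δ_[h])^[m] G (y + h) - c)) := by
      simp only [Nat.choose_one_right, Nat.add_sub_cancel, one_smul, Function.iterate_one]
      push_cast; ring
    rw [hmain, hshift, pow_succ']
    exact (mul_dvd_mul (pow_one π ▸ hg 1 y) (dvd_add (hG (m + 1) y) hGc)).mul_left _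
  · obtain ⟨hk1, hk⟩ := mem_erase.mp hk
    rcases Nat.eq_zero_or_pos k with rfl | hk0
    · rw [pow_succ', Function.iterate_zero_apply, Nat.sub_zero, zero_smul, add_zero]
      exact mul_dvd_mul hgy (hG (m + 1) y)
    · refine (pow_dvd_pow π (by omega : m + 2 ≤ k + m)).trans ?_
      rw [pow_add]
      exact mul_dvd_mul (hg k y) (dvd_fwdDiff_iter_apply h hGval _ _)

end HasKummerCongr

theorem pow_card_add_one_dvd_fwdDiff_iter_prod_sub {ι : Type*} {π : R} (s : Finset ι)
    {f : ι → M → R} (y : M) (hf : ∀ i ∈ s, HasKummerCongr h π (f i))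
    (hval : ∀ i ∈ s, ∀ x, π ∣ f i x) :
    π ^ (#s + 1) ∣
      (Δ_[h])^[#s] (∏ i ∈ s, f i) y - (#s).factorial * ∏ i ∈ s, Δ_[h] (f i) y := by
  classical
  induction s using Finset.induction_on with
  | empty => simp
  | insert a s ha ih =>
    have hf' : ∀ i ∈ s, HasKummerCongr h π (f i) := fun i hi ↦ hf i (mem_insert_of_mem hi)
    have hval' : ∀ i ∈ s, ∀ x, π ∣ f i x := fun i hi ↦ hval i (mem_insert_of_mem hi)
    have := (hf a (mem_insert_self a s)).pow_add_two_dvd_fwdDiff_iter_mul_sub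
      (hval a (mem_insert_self a s) y) (HasKummerCongr.prod hf') (pow_card_dvd_prod_apply hval')
      (ih hf' hval')
    rw [card_insert_of_notMem ha, prod_insert ha, prod_insert ha, Nat.factorial_succ]
    convert this using 2
    push_cast
    ring

end FwdDiff

theorem Nat.add_two_le_of_pow_dvd {p e l : ℕ} (hp : 2 ≤ p) (hl : 2 ≤ l)
    (hpl : ¬(p = 2 ∧ l = 2)) (hdvd : p ^ e ∣ l) : e + 2 ≤ l := by
  by_contra! he
  have hle : p ^ (l - 1) ≤ l :=
    (Nat.pow_le_pow_right (by omega) (by omega)).trans (Nat.le_of_dvd (by omega) hdvd)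
  rcases (show l = 2 ∨ 3 ≤ l by omega) with rfl | hl3
  · rw [Nat.add_one_sub_one, pow_one] at hle
    omega
  · have h2 : 2 ^ (l - 1) ≤ p ^ (l - 1) := Nat.pow_le_pow_left hp _
    have h3 : 2 ^ (l - 1) = 2 * 2 ^ (l - 2) := by
      rw [← pow_succ']; congr 1; omega
    have h4 := Nat.lt_two_pow_self (n := l - 2)
    omega

namespace PadicInt

variable {p : ℕ} [hp : Fact p.Prime]

theorem isUnit_add_p_mul {u : ℤ_[p]} (hu : IsUnit u) (w : ℤ_[p]) : IsUnit (u + p * w) := by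
  by_contra h
  rw [not_isUnit_iff, norm_lt_one_iff_dvd, dvd_add_left (dvd_mul_right _ _),
    ← norm_lt_one_iff_dvd, ← not_isUnit_iff] at h
  exact h hu

theorem p_sq_mul_natCast_dvd_p_pow {l : ℕ} (hl : 2 ≤ l) (hpl : ¬(p = 2 ∧ l = 2)) :
    (p : ℤ_[p]) ^ 2 * l ∣ (p : ℤ_[p]) ^ l := by
  obtain ⟨e, c, hc, rfl⟩ :=
    Nat.exists_eq_pow_mul_and_not_dvd (by omega : l ≠ 0) p hp.out.one_lt.ne'
  have hcu : IsUnit (c : ℤ_[p]) := by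
    rw [isUnit_iff, norm_natCast_eq_one_iff, hp.out.coprime_iff_not_dvd]; exact hc
  rw [Nat.cast_mul, Nat.cast_pow, ← mul_assoc, hcu.mul_right_dvd, ← pow_add]
  exact pow_dvd_pow _ (by
    have := Nat.add_two_le_of_pow_dvd hp.out.two_le hl hpl (dvd_mul_right _ _)
    omega)

end PadicInt

variable {p : ℕ} [Fact p.Prime]

theorem deltaH_one_eq (f : ℤ_[p] → ℤ_[p]) (n : ℕ) (s : ℤ_[p]) :
    deltaH p 1 f n s = (Δ_[1])^[n] f s := by
  rw [fwdDiff_iter_eq_sum_shift, deltaH]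
  refine sum_congr rfl fun k _ ↦ ?_
  simp only [zsmul_eq_mul, nsmul_eq_mul, Nat.cast_one, mul_one]
  push_cast
  ring

namespace WKS0

variable {f : ℤ_[p] → ℤ_[p]} (hf : WKS0 p f)
include hf

theorem hasKummerCongr : HasKummerCongr 1 (p : ℤ_[p]) f :=
  fun n s ↦ deltaH_one_eq f n s ▸ hf.1.2 n s

theorem exists_fwdDiff_natCast_eq (t : ℕ) : ∃ u, IsUnit u ∧ Δ_[1] f t = p * u := by
  obtain ⟨u, hu, hf1⟩ := hf.2.2.1
  obtain ⟨w, hw⟩ := hf.hasKummerCongr.pow_succ_dvd_fwdDiff_iter_sub 1 t 0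
  refine ⟨u + p * w, PadicInt.isUnit_add_p_mul hu w, ?_⟩
  rw [deltaH_one_eq] at hf1
  simp only [zero_add, nsmul_one, Function.iterate_one] at hw hf1
  linear_combination hw + hf1

theorem p_sq_mul_dvd_fwdDiff_iter (t : ℕ) {l : ℕ} (hl : 2 ≤ l) :
    (p : ℤ_[p]) ^ 2 * l ∣ (Δ_[1])^[l] f t := by
  by_cases hpl : p = 2 ∧ l = 2
  · obtain ⟨rfl, rfl⟩ := hpl
    have h0 := hf.2.2.2 rfl
    have ht := hf.hasKummerCongr.pow_succ_dvd_fwdDiff_iter_sub 2 t 0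
    rw [deltaH_one_eq] at h0
    rw [zero_add, nsmul_one] at ht
    have h8 : ((2 : ℕ) : ℤ_[2]) ^ 2 * ((2 : ℕ) : ℤ_[2]) = (2 : ℕ) ^ (2 + 1) := by ring
    rw [h8]
    simpa using dvd_add ht h0
  · exact (PadicInt.p_sq_mul_natCast_dvd_p_pow hl hpl).trans (hf.hasKummerCongr l t)

theorem exists_natCast_add_sub_eq (t m : ℕ) :
    ∃ u, IsUnit u ∧ f (t + m) - f t = p * m * u := by
  obtain ⟨u, hu, hΔ⟩ := hf.exists_fwdDiff_natCast_eq t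
  obtain _ | m := m
  · exact ⟨1, isUnit_one, by simp⟩
  obtain ⟨w, hw⟩ : (p : ℤ_[p]) ^ 2 * (m + 1 : ℕ) ∣
      ∑ k ∈ range m, ((m + 1).choose (k + 2) : ℤ_[p]) * (Δ_[1])^[k + 2] f t :=
    dvd_sum fun k _ ↦ natCast_mul_dvd_choose_mul _ (hf.p_sq_mul_dvd_fwdDiff_iter t (by omega))
  refine ⟨u + p * w, PadicInt.isUnit_add_p_mul hu w, ?_⟩
  have hN := shift_eq_sum_fwdDiff_iter 1 f (m + 1) (t : ℤ_[p])
  rw [sum_range_succ', sum_range_succ'] at hN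
  simp only [nsmul_eq_mul, mul_one, zero_add, Nat.choose_zero_right, Nat.choose_one_right,
    Function.iterate_zero_apply, Function.iterate_one, Nat.cast_one, one_mul] at hN
  rw [hN, hw, hΔ]
  push_cast
  ring

theorem norm_add_sub (s x : ℤ_[p]) : ‖f (s + x) - f s‖ = (p : ℝ)⁻¹ * ‖x‖ := by
  have hd : DenseRange fun tm : ℕ × ℕ ↦ ((tm.1 : ℤ_[p]), (tm.2 : ℤ_[p])) :=
    PadicInt.denseRange_natCast.prodMap PadicInt.denseRange_natCast
  have hcont := hf.1.1
  have hnat : ∀ t m : ℕ, ‖f (t + m) - f t‖ = (p : ℝ)⁻¹ * ‖(m : ℤ_[p])‖ := fun t m ↦ by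
    obtain ⟨u, hu, he⟩ := hf.exists_natCast_add_sub_eq t m
    rw [he, norm_mul, norm_mul, PadicInt.norm_p, PadicInt.isUnit_iff.mp hu, mul_one]
  exact congrFun (hd.equalizer (g := fun sx : ℤ_[p] × ℤ_[p] ↦ ‖f (sx.1 + sx.2) - f sx.1‖)
    (h := fun sx : ℤ_[p] × ℤ_[p] ↦ (p : ℝ)⁻¹ * ‖sx.2‖) (by fun_prop) (by fun_prop)
    (funext fun tm ↦ hnat tm.1 tm.2)) (s, x)

theorem norm_apply_of_apply_eq_zero {ξ : ℤ_[p]} (hξ : f ξ = 0) (s : ℤ_[p]) :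
    ‖f s‖ = (p : ℝ)⁻¹ * ‖s - ξ‖ := by
  simpa [hξ] using hf.norm_add_sub ξ (s - ξ)

theorem p_dvd_apply (s : ℤ_[p]) : (p : ℤ_[p]) ∣ f s := by
  have hs : (p : ℤ_[p]) ∣ f s - f 0 := by
    rw [← PadicInt.norm_lt_one_iff_dvd, ← zero_add s, hf.norm_add_sub]
    calc (p : ℝ)⁻¹ * ‖s‖ ≤ (p : ℝ)⁻¹ * 1 := by gcongr; exact PadicInt.norm_le_one s
      _ < 1 := by
        rw [mul_one]; exact inv_lt_one_of_one_lt₀ (mod_cast (Fact.out : p.Prime).one_lt)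
  simpa using dvd_add hs hf.2.1

end WKS0

theorem stmt17_general (p : ℕ) [Fact p.Prime] (n : ℕ) (f : Fin n → ℤ_[p] → ℤ_[p])
    (hf : ∀ i, WKS0 p (f i)) (ξ : Fin n → ℤ_[p]) (hξ : ∀ i, f i (ξ i) = 0)
    (F : ℤ_[p] → ℤ_[p]) (hF : ∀ s, F s = ∏ i, f i s) :
    (∀ s : ℤ_[p], ‖F s‖ = (p : ℝ) ^ (-(n : ℤ)) * ∏ i, ‖s - ξ i‖) ∧
      ((p : ℤ_[p]) ^ (n + 1) ∣
        deltaH p 1 F n 0 - (n.factorial : ℤ_[p]) * ∏ i, deltaH p 1 (f i) 1 0) ∧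
      ∀ ν : ℕ, ν ≤ n → (p : ℤ_[p]) ^ n ∣ deltaH p 1 F ν 0 := by
  have hFprod : F = ∏ i, f i := funext fun s ↦ (hF s).trans (prod_apply ..).symm
  have hval : ∀ i ∈ univ, ∀ x, (p : ℤ_[p]) ∣ f i x := fun i _ ↦ (hf i).p_dvd_apply
  refine ⟨fun s ↦ ?_, ?_, fun ν _ ↦ ?_⟩
  · simp_rw [hF, norm_prod, (hf _).norm_apply_of_apply_eq_zero (hξ _), prod_mul_distrib,
      prod_const, card_univ, Fintype.card_fin, zpow_neg, zpow_natCast, inv_pow]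
  · simpa [hFprod, deltaH_one_eq] using pow_card_add_one_dvd_fwdDiff_iter_prod_sub 1 univ 0
      (fun i _ ↦ (hf i).hasKummerCongr) hval
  · rw [deltaH_one_eq, hFprod]
    simpa using dvd_fwdDiff_iter_apply 1 (pow_card_dvd_prod_apply hval) ν 0

theorem stmt17 (p : ℕ) [Fact p.Prime] (n : ℕ) (hn : 1 ≤ n) (f : Fin n → ℤ_[p] → ℤ_[p])
    (hf : ∀ i, WKS0 p (f i)) (ξ : Fin n → ℤ_[p]) (hξ : ∀ i, f i (ξ i) = 0)
    (F : ℤ_[p] → ℤ_[p]) (hF : ∀ s, F s = ∏ i, f i s) :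
    (∀ s : ℤ_[p], ‖F s‖ = (p : ℝ) ^ (-(n : ℤ)) * ∏ i, ‖s - ξ i‖) ∧
      ((p : ℤ_[p]) ^ (n + 1) ∣
        deltaH p 1 F n 0 - (n.factorial : ℤ_[p]) * ∏ i, deltaH p 1 (f i) 1 0) ∧
      ∀ ν : ℕ, ν ≤ n → (p : ℤ_[p]) ^ n ∣ deltaH p 1 F ν 0 :=
  stmt17_general p n f hf ξ hξ F hF
end
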